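/- (Theorem 3, unauthorized case, rank form.) Suppose Γ is self-dual. If A ⊆ B ⊆ P with A ∉ Γ and B ∉ Γ, then rk(M_A) + rk(M_{P∖A}) ≤ rk(M_B) + rk(M_{P∖B}), where rk denotes rank over F_q. (By the entropy formula S(X) = (rk(M_X) + rk(M_{P∖X}) − rk(M))·log₂ q for unauthorized X, this expresses that the von Neumann entropy of the shares of unauthorized sets of the normal-form quantum secret sharing scheme is monotonically nondecreasing: S(A) ≤ S(B).) -/

import Mathlib

/-!
Normal-form monotone span programs (Smith's construction for quantum secret sharing).

Players are `Fin n`.  The minimal authorized sets are `A 0, …, A (k-1)`,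
distinct nonempty subsets forming an antichain whose union is all of `Fin n`.
`enum i` fixes an enumeration of the elements of `A i`; the last element
`enum i ⟨card - 1⟩` plays the role of the distinguished participant of block `i`.
-/

/-- The combinatorial data of a normal-form monotone span program. -/
structure MSP (n k : ℕ) where
  /-- the minimal authorized sets -/
  A : Fin k → Finset (Fin n)
  nonempty : ∀ i, (A i).Nonempty
  /-- antichain (this also forces the `A i` to be pairwise distinct) -/
  antichain : ∀ i j : Fin k, i ≠ j → ¬ A i ⊆ A j
  /-- every player occurs in some minimal authorized set -/
  cover : ∀ p : Fin n, ∃ i, p ∈ A i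
  /-- a fixed enumeration `p_{i,1}, …, p_{i,|A_i|}` of each `A i` -/
  enum : ∀ i, Fin ((A i).card) ≃ {p : Fin n // p ∈ A i}

namespace MSP

variable {n k : ℕ}

/-- Row indices of the span matrix: block `i` has `|A i|` rows. -/
abbrev Rows (S : MSP n k) := (i : Fin k) × Fin ((S.A i).card)

/-- Column indices: the first column (`none`) together with the blocks
`C i` of `r_i = |A i| - 1` columns (`some ⟨i, j⟩`). -/
abbrev Cols (S : MSP n k) := Option ((i : Fin k) × Fin ((S.A i).card - 1))

/-- The player labelling the rows (the map `ψ`). -/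
def label (S : MSP n k) (r : S.Rows) : Fin n := (S.enum r.1 r.2 : Fin n)

/-- The normal-form span matrix `M`.  In block `i`, row `j` with
`j < |A i| - 1` is the `j`-th identity row (a single `1` in column
`some ⟨i, j⟩`), and the last row (`j = |A i| - 1`) is
`(1, 0, …, 0, -1, …, -1)`: a `1` in column `none` and `-1` in every
column of block `i`. -/
def M (F : Type*) [Field F] (S : MSP n k) : Matrix S.Rows S.Cols F :=
  Matrix.of fun r c =>
    match c with
    | none => if (r.2 : ℕ) = (S.A r.1).card - 1 then 1 else 0
    | some ⟨i, j⟩ =>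
        if i = r.1 then
          (if (r.2 : ℕ) = (S.A r.1).card - 1 then -1
           else if (j : ℕ) = (r.2 : ℕ) then 1 else 0)
        else 0

/-- The submatrix `M_B` of `M` consisting of all rows labelled by players in `B`. -/
def MSub (F : Type*) [Field F] (S : MSP n k) (B : Finset (Fin n)) :
    Matrix {r : S.Rows // S.label r ∈ B} S.Cols F :=
  Matrix.of fun r c => M F S r.1 c

/-- The vector `ε₁ = (1, 0, …, 0)`. -/
def eps1 (F : Type*) [Field F] (S : MSP n k) : S.Cols → F :=
  fun c => match c with
  | none => 1
  | some _ => 0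

/-- The access structure computed by the program:
`B` is authorized iff it contains some minimal authorized set. -/
def auth (S : MSP n k) (B : Finset (Fin n)) : Prop := ∃ i, S.A i ⊆ B

/-- Self-duality of the access structure. -/
def selfDual (S : MSP n k) : Prop :=
  ∀ X : Finset (Fin n), S.auth X ↔ ¬ S.auth (Finset.univ \ X)

end MSP

open MSP

/-- `f(X) = rk(M_X) + rk(M_{P∖X})`, the rank functional governing the entropy
of the normal-form secret sharing state. -/
noncomputable def MSP.rkPair (F : Type*) [Field F] {n k : ℕ} (S : MSP n k) (X : Finset (Fin n)) : ℕ :=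
  (MSub F S X).rank + (MSub F S (Finset.univ \ X)).rank

/-!
If `B` is unauthorized, the rows of `M_B` are linearly independent: column `(i, j)` of `M` is
`e_{(i,j)} - e_{(i,last)}`, so the coefficients of a row dependency are constant on each block
`i`, and a player of `A_i` outside `B` makes that constant zero. Now pass from `B` to `A ⊆ B`:
`M_B` loses the rows labelled in `B ∖ A`, and its rank drops by at least their number, while
`M_{P∖B}` gains these rows, and its rank grows by at most their number.
-/

open Module Submodule Set Matrix

section
variable {F V ι : Type*} [Field F] [AddCommGroup V] [Module F V] [Finite ι]

theorem finrank_span_image_le_ncard (v : ι → V) (s : Set ι) :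
    finrank F (span F (v '' s)) ≤ s.ncard := by
  have := Fintype.ofFinite s
  rw [image_eq_range, ← Nat.card_coe_set_eq, Nat.card_eq_fintype_card]
  exact finrank_range_le_card _

theorem LinearIndepOn.finrank_span_image {v : ι → V} {s : Set ι} (hs : LinearIndepOn F v s) :
    finrank F (span F (v '' s)) = s.ncard := by
  have := Fintype.ofFinite s
  rw [image_eq_range, ← Nat.card_coe_set_eq, Nat.card_eq_fintype_card]
  exact finrank_span_eq_card hs

theorem finrank_span_image_le_add_ncard_sdiff (v : ι → V) {s t : Set ι} (hst : s ⊆ t) :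
    finrank F (span F (v '' t)) ≤ finrank F (span F (v '' s)) + (t \ s).ncard := by
  have : FiniteDimensional F (span F (v '' s)) := .span_of_finite F ((toFinite s).image v)
  have : FiniteDimensional F (span F (v '' (t \ s))) := .span_of_finite F ((toFinite _).image v)
  calc finrank F (span F (v '' t))
      = finrank F ↥(span F (v '' s) ⊔ span F (v '' (t \ s))) := by
        rw [← span_union, ← image_union, union_sdiff_cancel hst]
    _ ≤ finrank F (span F (v '' s)) + finrank F (span F (v '' (t \ s))) :=
        Submodule.finrank_add_le_finrank_add_finrank _ _
    _ ≤ finrank F (span F (v '' s)) + (t \ s).ncard :=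
        Nat.add_le_add_left (finrank_span_image_le_ncard v _) _

theorem finrank_span_image_add_finrank_span_image_compl_le (v : ι → V) {s t : Set ι}
    (hst : s ⊆ t) (ht : LinearIndepOn F v t) :
    finrank F (span F (v '' s)) + finrank F (span F (v '' sᶜ)) ≤
      finrank F (span F (v '' t)) + finrank F (span F (v '' tᶜ)) := by
  have hs := finrank_span_image_le_ncard (F := F) v s
  have hsc := finrank_span_image_le_add_ncard_sdiff (F := F) v (compl_subset_compl.mpr hst)
  rw [compl_sdiff_compl] at hsc
  rw [ht.finrank_span_image, ← ncard_sdiff_add_ncard_of_subset hst]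
  omega

end

namespace MSP
variable {n k : ℕ} (S : MSP n k) (F : Type*) [Field F]

def lastIdx (i : Fin k) : Fin (S.A i).card :=
  ⟨(S.A i).card - 1, Nat.sub_lt (S.nonempty i).card_pos one_pos⟩

lemma M_transpose_some (i : Fin k) (j : Fin ((S.A i).card - 1)) :
    (M F S)ᵀ (some ⟨i, j⟩) =
      Pi.single ⟨i, Fin.castLE (Nat.sub_le _ _) j⟩ 1 - Pi.single ⟨i, S.lastIdx i⟩ 1 := by
  funext ⟨i', j'⟩
  by_cases hi : i = i'
  · subst hi
    have hj := j.2
    by_cases hlast : (j' : ℕ) = (S.A i).card - 1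
    · simp [M, lastIdx, Pi.single_apply, Fin.ext_iff, hlast, hj.ne']
    · simp [M, lastIdx, Pi.single_apply, Fin.ext_iff, hlast, eq_comm]
  · simp [M, hi]

lemma vecMul_M_some (g : S.Rows → F) (i : Fin k) (j : Fin ((S.A i).card - 1)) :
    (g ᵥ* M F S) (some ⟨i, j⟩) = g ⟨i, Fin.castLE (Nat.sub_le _ _) j⟩ - g ⟨i, S.lastIdx i⟩ := by
  change g ⬝ᵥ (M F S)ᵀ (some ⟨i, j⟩) = _
  rw [M_transpose_some, dotProduct_sub, dotProduct_single, dotProduct_single, mul_one, mul_one]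

lemma apply_eq_apply_lastIdx_of_vecMul_M_eq_zero {g : S.Rows → F} (hg : g ᵥ* M F S = 0)
    (r : S.Rows) : g r = g ⟨r.1, S.lastIdx r.1⟩ := by
  obtain ⟨i, j⟩ := r
  by_cases hj : (j : ℕ) = (S.A i).card - 1
  · rw [show j = S.lastIdx i from Fin.ext hj]
  · have hlt : (j : ℕ) < (S.A i).card - 1 := by omega
    have := congrFun hg (some ⟨i, ⟨j, hlt⟩⟩)
    rwa [vecMul_M_some, Pi.zero_apply, sub_eq_zero] at this

lemma linearIndepOn_M_of_not_auth {X : Finset (Fin n)} (hX : ¬ S.auth X) :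
    LinearIndepOn F (M F S).row {r | S.label r ∈ X} := by
  rw [linearIndepOn_iff]
  intro l hl hl0
  rw [Finsupp.linearCombination_apply, Finsupp.sum_fintype _ _ (by simp)] at hl0
  change ∑ r, l r • M F S r = 0 at hl0
  rw [← vecMul_eq_sum] at hl0
  have hconst := S.apply_eq_apply_lastIdx_of_vecMul_M_eq_zero F hl0
  ext ⟨i, j⟩
  obtain ⟨p, hpA, hpX⟩ := Finset.not_subset.mp fun h => hX ⟨i, h⟩
  have hout : l ⟨i, (S.enum i).symm ⟨p, hpA⟩⟩ = 0 :=
    (Finsupp.mem_supported' F l).mp hl _ (by simpa [label] using hpX)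
  calc l ⟨i, j⟩ = l ⟨i, S.lastIdx i⟩ := hconst _
    _ = l ⟨i, (S.enum i).symm ⟨p, hpA⟩⟩ := (hconst ⟨i, _⟩).symm
    _ = 0 := hout

lemma rank_MSub (X : Finset (Fin n)) :
    (MSub F S X).rank = finrank F (span F ((M F S).row '' {r | S.label r ∈ X})) := by
  rw [Matrix.rank_eq_finrank_span_row, image_eq_range]
  rfl

lemma rank_MSub_compl (X : Finset (Fin n)) :
    (MSub F S (Finset.univ \ X)).rank =
      finrank F (span F ((M F S).row '' {r | S.label r ∈ X}ᶜ)) := by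
  have hcompl : {r | S.label r ∈ Finset.univ \ X} = {r | S.label r ∈ X}ᶜ := by ext; simp
  rw [rank_MSub, hcompl]

end MSP

theorem entropy_monotone_unauthorized_general {F : Type*} [Field F] {n k : ℕ}
    (S : MSP n k) (A B : Finset (Fin n)) (hAB : A ⊆ B) (hB : ¬ S.auth B) :
    S.rkPair F A ≤ S.rkPair F B := by
  rw [rkPair, rkPair, rank_MSub_compl, rank_MSub_compl, rank_MSub, rank_MSub]
  exact finrank_span_image_add_finrank_span_image_compl_le _ (fun _ hr => hAB hr)
    (S.linearIndepOn_M_of_not_auth F hB)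

/-- Theorem 3, unauthorized case, rank form.  Suppose `Γ` is
self-dual.  If `A ⊆ B ⊆ P` are both unauthorized, then
`rk(M_A) + rk(M_{P∖A}) ≤ rk(M_B) + rk(M_{P∖B})`.  Via the entropy formula
`S(X) = (rk(M_X) + rk(M_{P∖X}) − rk M)·log₂ q` for unauthorized `X`, this says
the von Neumann entropy of unauthorized sets is monotonically nondecreasing. -/
theorem entropy_monotone_unauthorized {F : Type*} [Field F] [Fintype F] {n k : ℕ}
    (S : MSP n k) (hsd : S.selfDual) (A B : Finset (Fin n)) (hAB : A ⊆ B)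
    (hA : ¬ S.auth A) (hB : ¬ S.auth B) :
    S.rkPair F A ≤ S.rkPair F B :=
  entropy_monotone_unauthorized_general S A B hAB hB
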